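/- Let N ∈ ℕ, Q_1,…,Q_N, E_1,…,E_{N−1} > 0, and let S : ℝ → ℝ be the path encoding: S is piecewise linear with S(0) = 0, slope −1 on each interval O_n = [Σ_{k<n}(Q_k+E_k), Σ_{k<n}(Q_k+E_k) + Q_n] for 1 ≤ n ≤ N, and slope +1 elsewhere. Writing a_n, b_n for the left and right endpoints of O_n and M(x) = sup_{y≤x} S(y), it holds for each 1 ≤ n ≤ N that M(b_n) − S(b_n) = Σ_{k=1}^n Q_k − Σ_{k=1}^{n−1} (𝒯Q)_k, where (𝒯Q)_k = min{ Σ_{j=1}^k Q_j − Σ_{j=1}^{k−1}(𝒯Q)_j , E_k }. -/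

import Mathlib

/-!
The path `S` rises with slope `1` off the intervals `[a_n, b_n]` and falls with slope `-1` on them,
so `M(0) = S(0)` and `S` is unimodal on `[b_n, b_{n+1}]` with peak at `a_{n+1}`; hence
`M(b_{n+1}) = max (M(b_n), S(a_{n+1}))`. Writing `M(b_n) = S(b_n) + R_n` and using
`S(a_{n+1}) = S(b_n) + E_n`, `S(b_{n+1}) = S(a_{n+1}) - Q_{n+1}`, this becomes
`R_{n+1} = R_n + Q_{n+1} - min (R_n, E_n)`, which is the recursion defining `𝒯Q`.
-/

/-- Left endpoint of the `n`th slope `-1` interval of the path encoding. -/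
noncomputable def aPt (Q E : ℕ → ℝ) (n : ℕ) : ℝ :=
  ∑ k ∈ Finset.Icc 1 (n - 1), (Q k + E k)

/-- Right endpoint of the `n`th slope `-1` interval of the path encoding. -/
noncomputable def bPt (Q E : ℕ → ℝ) (n : ℕ) : ℝ := aPt Q E n + Q n

/-- The union of the slope `-1` intervals. -/
def ballSet (N : ℕ) (Q E : ℕ → ℝ) : Set ℝ :=
  ⋃ n ∈ Finset.Icc 1 N, Set.Icc (aPt Q E n) (bPt Q E n)

/-- The path encoding of the configuration `((Q_n)_{n=1}^N, (E_n)_{n=1}^{N-1})`. -/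
noncomputable def pathEnc (N : ℕ) (Q E : ℕ → ℝ) (x : ℝ) : ℝ :=
  ∫ y in (0:ℝ)..x, (1 - 2 * Set.indicator (ballSet N Q E) (fun _ => (1:ℝ)) y)

noncomputable def pastMax (S : ℝ → ℝ) (x : ℝ) : ℝ := sSup (S '' Set.Iic x)

open MeasureTheory Set

theorem isGreatest_image_Iic_of_unimodal {α β : Type*} [LinearOrder α] [LinearOrder β]
    {f : α → β} {b a b' : α} {m : β} (hm : IsGreatest (f '' Iic b) m) (hba : b ≤ a)
    (hab' : a ≤ b') (hmono : MonotoneOn f (Icc b a)) (hanti : AntitoneOn f (Icc a b')) :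
    IsGreatest (f '' Iic b') (max m (f a)) := by
  have hpeak : IsGreatest (f '' Icc b b') (f a) := by
    refine ⟨⟨a, ⟨hba, hab'⟩, rfl⟩, ?_⟩
    rintro _ ⟨y, hy, rfl⟩
    rcases le_total y a with hya | hay
    · exact hmono ⟨hy.1, hya⟩ ⟨hba, le_rfl⟩ hya
    · exact hanti ⟨le_rfl, hab'⟩ ⟨hay, hy.2⟩ hay
  rw [← Iic_union_Icc_eq_Iic (hba.trans hab'), image_union]
  exact hm.union hpeak

section IndicatorIntegral

variable {B : Set ℝ} {c d : ℝ}

theorem integral_one_sub_two_indicator_of_disjoint (hcd : c ≤ d) (h : Disjoint (Ioo c d) B) :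
    ∫ y in c..d, (1 - 2 * B.indicator (fun _ => (1:ℝ)) y) = d - c := by
  rw [intervalIntegral.integral_of_le hcd, integral_Ioc_eq_integral_Ioo,
    setIntegral_congr_fun measurableSet_Ioo (g := fun _ => (1:ℝ))
      fun y hy => by simp [indicator_of_notMem (h.notMem_of_mem_left hy)],
    setIntegral_const, Real.volume_real_Ioo_of_le hcd, smul_eq_mul, mul_one]

theorem integral_one_sub_two_indicator_of_subset (hcd : c ≤ d) (h : Ioo c d ⊆ B) :
    ∫ y in c..d, (1 - 2 * B.indicator (fun _ => (1:ℝ)) y) = c - d := by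
  rw [intervalIntegral.integral_of_le hcd, integral_Ioc_eq_integral_Ioo,
    setIntegral_congr_fun measurableSet_Ioo (g := fun _ => (-1:ℝ))
      fun y hy => by norm_num [indicator_of_mem (h hy)],
    setIntegral_const, Real.volume_real_Ioo_of_le hcd, smul_eq_mul]
  ring

end IndicatorIntegral

section PathEncoding

variable {N : ℕ} {Q E : ℕ → ℝ}

theorem measurableSet_ballSet : MeasurableSet (ballSet N Q E) :=
  (Finset.Icc 1 N).measurableSet_biUnion fun _ _ => measurableSet_Icc

theorem intervalIntegrable_pathEnc_integrand (a b : ℝ) :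
    IntervalIntegrable (fun y => 1 - 2 * (ballSet N Q E).indicator (fun _ => (1:ℝ)) y)
      volume a b := by
  refine intervalIntegrable_const.sub (IntervalIntegrable.const_mul ?_ _)
  rw [intervalIntegrable_iff]
  exact (integrableOn_const measure_Ioc_lt_top.ne).indicator measurableSet_ballSet

theorem pathEnc_sub_pathEnc (c d : ℝ) :
    pathEnc N Q E d - pathEnc N Q E c =
      ∫ y in c..d, (1 - 2 * (ballSet N Q E).indicator (fun _ => (1:ℝ)) y) :=
  intervalIntegral.integral_interval_sub_left (intervalIntegrable_pathEnc_integrand 0 d)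
    (intervalIntegrable_pathEnc_integrand 0 c)

theorem pathEnc_eq_add_of_disjoint {c d : ℝ} (hcd : c ≤ d)
    (h : Disjoint (Ioo c d) (ballSet N Q E)) : pathEnc N Q E d = pathEnc N Q E c + (d - c) := by
  have hdiff := pathEnc_sub_pathEnc (N := N) (Q := Q) (E := E) c d
  rw [integral_one_sub_two_indicator_of_disjoint hcd h] at hdiff
  linarith

theorem pathEnc_eq_sub_of_subset {c d : ℝ} (hcd : c ≤ d) (h : Ioo c d ⊆ ballSet N Q E) :
    pathEnc N Q E d = pathEnc N Q E c - (d - c) := by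
  have hdiff := pathEnc_sub_pathEnc (N := N) (Q := Q) (E := E) c d
  rw [integral_one_sub_two_indicator_of_subset hcd h] at hdiff
  linarith

theorem monotoneOn_pathEnc {s : Set ℝ} [s.OrdConnected]
    (h : Disjoint (interior s) (ballSet N Q E)) : MonotoneOn (pathEnc N Q E) s := by
  intro x hx y hy hxy
  have hsub : Ioo x y ⊆ interior s :=
    interior_maximal (Ioo_subset_Icc_self.trans (Set.Icc_subset s hx hy)) isOpen_Ioo
  rw [pathEnc_eq_add_of_disjoint hxy (h.mono_left hsub)]
  linarith

theorem antitoneOn_pathEnc {c d : ℝ} (h : Ioo c d ⊆ ballSet N Q E) :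
    AntitoneOn (pathEnc N Q E) (Icc c d) := by
  intro x hx y hy hxy
  rw [pathEnc_eq_sub_of_subset hxy ((Ioo_subset_Ioo hx.1 hy.2).trans h)]
  linarith

end PathEncoding

section Geometry

variable {N : ℕ} {Q E : ℕ → ℝ}

theorem aPt_one : aPt Q E 1 = 0 := by simp [aPt]

theorem aPt_succ {m : ℕ} (hm : 1 ≤ m) : aPt Q E (m + 1) = bPt Q E m + E m := by
  obtain ⟨j, rfl⟩ : ∃ j, m = j + 1 := ⟨m - 1, by omega⟩
  rw [aPt, bPt, aPt, Nat.add_sub_cancel, Nat.add_sub_cancel, Finset.sum_Icc_succ_top (by omega)]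
  ring

theorem aPt_le_bPt (hQ : ∀ n, 1 ≤ n → n ≤ N → 0 ≤ Q n) {m : ℕ} (hm : 1 ≤ m) (hmN : m ≤ N) :
    aPt Q E m ≤ bPt Q E m :=
  le_add_of_nonneg_right (hQ m hm hmN)

theorem aPt_mono (hQ : ∀ n, 1 ≤ n → n ≤ N → 0 ≤ Q n) (hE : ∀ n, 1 ≤ n → n ≤ N - 1 → 0 ≤ E n)
    {i j : ℕ} (hij : i ≤ j) (hj : j ≤ N) : aPt Q E i ≤ aPt Q E j := by
  refine Finset.sum_le_sum_of_subset_of_nonneg (Finset.Icc_subset_Icc le_rfl (by omega)) ?_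
  intro k hk _
  obtain ⟨hk1, hkj⟩ := Finset.mem_Icc.1 hk
  exact add_nonneg (hQ k hk1 (by omega)) (hE k hk1 (by omega))

theorem bPt_le_aPt (hQ : ∀ n, 1 ≤ n → n ≤ N → 0 ≤ Q n) (hE : ∀ n, 1 ≤ n → n ≤ N - 1 → 0 ≤ E n)
    {i j : ℕ} (hi : 1 ≤ i) (hij : i < j) (hj : j ≤ N) : bPt Q E i ≤ aPt Q E j :=
  calc bPt Q E i ≤ aPt Q E (i + 1) := by
        rw [aPt_succ hi]
        exact le_add_of_nonneg_right (hE i hi (by omega))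
    _ ≤ aPt Q E j := aPt_mono hQ hE hij hj

theorem Icc_subset_ballSet {m : ℕ} (hm : 1 ≤ m) (hmN : m ≤ N) :
    Icc (aPt Q E m) (bPt Q E m) ⊆ ballSet N Q E :=
  subset_biUnion_of_mem (u := fun n => Icc (aPt Q E n) (bPt Q E n))
    (Finset.mem_coe.2 (Finset.mem_Icc.2 ⟨hm, hmN⟩))

theorem disjoint_Iio_zero_ballSet (hQ : ∀ n, 1 ≤ n → n ≤ N → 0 ≤ Q n)
    (hE : ∀ n, 1 ≤ n → n ≤ N - 1 → 0 ≤ E n) : Disjoint (Iio 0) (ballSet N Q E) := by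
  refine disjoint_left.2 fun y hy hball => ?_
  simp only [ballSet, mem_iUnion, Finset.mem_Icc] at hball
  obtain ⟨j, ⟨hj1, hjN⟩, hyj⟩ := hball
  have := aPt_mono hQ hE hj1 hjN
  rw [aPt_one] at this
  linarith [hyj.1, mem_Iio.1 hy]

theorem disjoint_gap_ballSet (hQ : ∀ n, 1 ≤ n → n ≤ N → 0 ≤ Q n)
    (hE : ∀ n, 1 ≤ n → n ≤ N - 1 → 0 ≤ E n) {m : ℕ} (hm : 1 ≤ m) (hmN : m + 1 ≤ N) :
    Disjoint (Ioo (bPt Q E m) (aPt Q E (m + 1))) (ballSet N Q E) := by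
  refine disjoint_left.2 fun y hy hball => ?_
  simp only [ballSet, mem_iUnion, Finset.mem_Icc] at hball
  obtain ⟨j, ⟨hj1, hjN⟩, hyj⟩ := hball
  rcases lt_trichotomy j m with hjm | rfl | hmj
  · linarith [bPt_le_aPt hQ hE hj1 hjm (by omega), aPt_le_bPt (E := E) hQ hm (by omega),
      hyj.2, hy.1]
  · linarith [hyj.2, hy.1]
  · linarith [aPt_mono hQ hE hmj hjN, hyj.1, hy.2]

theorem pathEnc_bPt (hQ : ∀ n, 1 ≤ n → n ≤ N → 0 ≤ Q n) {m : ℕ} (hm : 1 ≤ m) (hmN : m ≤ N) :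
    pathEnc N Q E (bPt Q E m) = pathEnc N Q E (aPt Q E m) - Q m := by
  rw [pathEnc_eq_sub_of_subset (aPt_le_bPt hQ hm hmN)
    (Ioo_subset_Icc_self.trans (Icc_subset_ballSet hm hmN)), bPt, add_sub_cancel_left]

theorem pathEnc_aPt_succ (hQ : ∀ n, 1 ≤ n → n ≤ N → 0 ≤ Q n)
    (hE : ∀ n, 1 ≤ n → n ≤ N - 1 → 0 ≤ E n) {m : ℕ} (hm : 1 ≤ m) (hmN : m + 1 ≤ N) :
    pathEnc N Q E (aPt Q E (m + 1)) = pathEnc N Q E (bPt Q E m) + E m := by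
  rw [pathEnc_eq_add_of_disjoint (bPt_le_aPt hQ hE hm (Nat.lt_succ_self m) hmN)
    (disjoint_gap_ballSet hQ hE hm hmN), aPt_succ hm, add_sub_cancel_left]

end Geometry

noncomputable def carrierValue (Q TQ : ℕ → ℝ) (n : ℕ) : ℝ :=
  (∑ k ∈ Finset.Icc 1 n, Q k) - ∑ k ∈ Finset.Icc 1 (n - 1), TQ k

theorem carrierValue_one (Q TQ : ℕ → ℝ) : carrierValue Q TQ 1 = Q 1 := by
  simp [carrierValue]

theorem carrierValue_succ (Q TQ : ℕ → ℝ) {n : ℕ} (hn : 1 ≤ n) :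
    carrierValue Q TQ (n + 1) = carrierValue Q TQ n + Q (n + 1) - TQ n := by
  obtain ⟨j, rfl⟩ : ∃ j, n = j + 1 := ⟨n - 1, by omega⟩
  simp only [carrierValue, Nat.add_sub_cancel]
  rw [Finset.sum_Icc_succ_top (by omega : 1 ≤ j + 1 + 1), Finset.sum_Icc_succ_top (by omega) TQ]
  ring

theorem isGreatest_pathEnc_image_Iic_bPt {N : ℕ} {Q E TQ : ℕ → ℝ}
    (hQ : ∀ n, 1 ≤ n → n ≤ N → 0 ≤ Q n) (hE : ∀ n, 1 ≤ n → n ≤ N - 1 → 0 ≤ E n)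
    (hTQ : ∀ n, 1 ≤ n → n ≤ N - 1 → TQ n = min (carrierValue Q TQ n) (E n))
    {n : ℕ} (hn : 1 ≤ n) (hnN : n ≤ N) :
    IsGreatest (pathEnc N Q E '' Iic (bPt Q E n))
      (pathEnc N Q E (bPt Q E n) + carrierValue Q TQ n) := by
  induction n, hn using Nat.le_induction with
  | base =>
    have hab := aPt_le_bPt (E := E) hQ le_rfl hnN
    have hrise : MonotoneOn (pathEnc N Q E) (Iic 0) :=
      monotoneOn_pathEnc (by rw [interior_Iic]; exact disjoint_Iio_zero_ballSet hQ hE)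
    have hS0 : IsGreatest (pathEnc N Q E '' Iic 0) (pathEnc N Q E 0) :=
      hrise.map_isGreatest isGreatest_Iic
    have hval : pathEnc N Q E (bPt Q E 1) + carrierValue Q TQ 1 =
        max (pathEnc N Q E 0) (pathEnc N Q E (aPt Q E 1)) := by
      rw [pathEnc_bPt hQ le_rfl hnN, carrierValue_one, aPt_one, max_self, sub_add_cancel]
    rw [hval]
    refine isGreatest_image_Iic_of_unimodal hS0 aPt_one.ge hab ?_
      (antitoneOn_pathEnc (Ioo_subset_Icc_self.trans (Icc_subset_ballSet le_rfl hnN)))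
    rw [aPt_one, Icc_self]
    exact monotoneOn_singleton _
  | succ n hn ih =>
    have hba := bPt_le_aPt hQ hE hn (Nat.lt_succ_self n) hnN
    -- `max (R_n, E_n) = R_n + E_n - min (R_n, E_n)` turns the recursion for `𝒯Q` into a max
    have hval : pathEnc N Q E (bPt Q E (n + 1)) + carrierValue Q TQ (n + 1) =
        max (pathEnc N Q E (bPt Q E n) + carrierValue Q TQ n)
          (pathEnc N Q E (aPt Q E (n + 1))) := by
      rw [pathEnc_bPt hQ (by omega) hnN, pathEnc_aPt_succ hQ hE hn hnN, carrierValue_succ Q TQ hn,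
        hTQ n hn (by omega), max_add_add_left]
      linarith [min_add_max (carrierValue Q TQ n) (E n)]
    rw [hval]
    exact isGreatest_image_Iic_of_unimodal (ih (by omega)) hba (aPt_le_bPt hQ (by omega) hnN)
      (monotoneOn_pathEnc (by rw [interior_Icc]; exact disjoint_gap_ballSet hQ hE hn hnN))
      (antitoneOn_pathEnc (Ioo_subset_Icc_self.trans (Icc_subset_ballSet (by omega) hnN)))

theorem toda_carrier_eq_max_minus_path_general (N : ℕ) (Q E TQ : ℕ → ℝ)
    (hQ : ∀ n, 1 ≤ n → n ≤ N → 0 < Q n)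
    (hE : ∀ n, 1 ≤ n → n ≤ N - 1 → 0 < E n)
    (hTQ : ∀ n, 1 ≤ n → n ≤ N - 1 →
      TQ n = min ((∑ k ∈ Finset.Icc 1 n, Q k) - ∑ k ∈ Finset.Icc 1 (n - 1), TQ k) (E n)) :
    ∀ n, 1 ≤ n → n ≤ N →
      pastMax (pathEnc N Q E) (bPt Q E n) - pathEnc N Q E (bPt Q E n) =
        (∑ k ∈ Finset.Icc 1 n, Q k) - ∑ k ∈ Finset.Icc 1 (n - 1), TQ k := by
  intro n hn hnN
  have hmax := isGreatest_pathEnc_image_Iic_bPt (TQ := TQ) (fun k h₁ h₂ => (hQ k h₁ h₂).le)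
    (fun k h₁ h₂ => (hE k h₁ h₂).le) hTQ hn hnN
  rw [pastMax, hmax.csSup_eq, carrierValue]
  ring

theorem toda_carrier_eq_max_minus_path (N : ℕ) (hN : 1 ≤ N) (Q E TQ : ℕ → ℝ)
    (hQ : ∀ n, 1 ≤ n → n ≤ N → 0 < Q n)
    (hE : ∀ n, 1 ≤ n → n ≤ N - 1 → 0 < E n)
    (hTQ : ∀ n, 1 ≤ n → n ≤ N - 1 →
      TQ n = min ((∑ k ∈ Finset.Icc 1 n, Q k) - ∑ k ∈ Finset.Icc 1 (n - 1), TQ k) (E n))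
    (hTQN : TQ N = (∑ k ∈ Finset.Icc 1 N, Q k) - ∑ k ∈ Finset.Icc 1 (N - 1), TQ k) :
    ∀ n, 1 ≤ n → n ≤ N →
      pastMax (pathEnc N Q E) (bPt Q E n) - pathEnc N Q E (bPt Q E n) =
        (∑ k ∈ Finset.Icc 1 n, Q k) - ∑ k ∈ Finset.Icc 1 (n - 1), TQ k :=
  toda_carrier_eq_max_minus_path_general N Q E TQ hQ hE hTQ
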